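/- With a = C√B for constant C > 0, h = max{w ∈ ℕ : aw + w(w+1)/2 ≤ B}, and p = max{w ∈ ℕ : w(w+1)/2 ≤ B − a}, we have lim_{B→∞} (a + p)/(a + h) = (C + √2)/√(C² + 2), and therefore the supremum of this limit over C > 0 equals √2. -/

import Mathlib

/-!
Both maxima are integer parts of positive roots of quadratics: `w ↦ c w + w (w + 1) / 2 ≤ x`
holds exactly up to `-(c + 1/2) + √((c + 1/2)² + 2x)`. With `a ≈ C√B` and `x ≈ B`, rescaling
by `√B` gives `a / √B → C`, `p / √B → √2` and `h / √B → √(C² + 2) - C`, so the ratio tends to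
`(C + √2) / √(C² + 2)`. This is at most `√2` because `(C + √2)² ≤ 2 (C² + 2)` is
`(C - √2)² ≥ 0`, with equality at `C = √2`.
-/

open Filter Topology

noncomputable def quadRoot (c x : ℝ) : ℝ := -(c + 1 / 2) + √((c + 1 / 2) ^ 2 + 2 * x)

lemma mul_add_triangle_le_iff_le_quadRoot {c t : ℝ} (x : ℝ) (hc : 0 ≤ c) (ht : 0 ≤ t) :
    c * t + t * (t + 1) / 2 ≤ x ↔ t ≤ quadRoot c x := by
  have hpos : 0 < t + (c + 1 / 2) := by positivity
  rw [quadRoot, ← sub_le_iff_le_add', sub_neg_eq_add, Real.le_sqrt' hpos]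
  constructor <;> intro h <;> linarith

lemma quadRoot_nonneg {c x : ℝ} (hc : 0 ≤ c) (hx : 0 ≤ x) : 0 ≤ quadRoot c x :=
  (mul_add_triangle_le_iff_le_quadRoot x hc le_rfl).1 (by simpa using hx)

lemma Nat.sSup_setOf_cast_le {R : Type*} [Semiring R] [LinearOrder R] [IsStrictOrderedRing R]
    [FloorSemiring R] {r : R} : sSup {w : ℕ | (w : R) ≤ r} = ⌊r⌋₊ := by
  rcases lt_or_ge r 0 with hr | hr
  · have hempty : {w : ℕ | (w : R) ≤ r} = ∅ :=
      Set.eq_empty_of_forall_notMem fun w hw => (hr.trans_le w.cast_nonneg).not_ge hw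
    rw [hempty, csSup_empty, Nat.floor_of_nonpos hr.le, bot_eq_zero]
  · simp_rw [← Nat.le_floor_iff hr]
    exact csSup_Iic

lemma sSup_setOf_mul_add_triangle_le {c : ℝ} (x : ℝ) (hc : 0 ≤ c) :
    sSup {w : ℕ | c * w + (w : ℝ) * ((w : ℝ) + 1) / 2 ≤ x} = ⌊quadRoot c x⌋₊ := by
  rw [← Nat.sSup_setOf_cast_le]
  exact congrArg sSup (Set.ext fun w => mul_add_triangle_le_iff_le_quadRoot x hc w.cast_nonneg)

section Asymptotics

variable {α : Type*} {l : Filter α}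

lemma tendsto_natFloor_div {r s : α → ℝ} {L : ℝ} (hr : ∀ᶠ n in l, 0 ≤ r n)
    (hs : Tendsto s l atTop) (h : Tendsto (fun n => r n / s n) l (𝓝 L)) :
    Tendsto (fun n => (⌊r n⌋₊ : ℝ) / s n) l (𝓝 L) := by
  have hlow : Tendsto (fun n => r n / s n - 1 / s n) l (𝓝 L) := by
    simpa using h.sub ((tendsto_const_nhds (x := (1 : ℝ))).div_atTop hs)
  refine tendsto_of_tendsto_of_tendsto_of_le_of_le' hlow h ?_ ?_
  · filter_upwards [hs.eventually_gt_atTop 0] with n hn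
    rw [← sub_div]
    exact div_le_div_of_nonneg_right (Nat.sub_one_lt_floor _).le hn.le
  · filter_upwards [hr, hs.eventually_gt_atTop 0] with n hrn hn
    exact div_le_div_of_nonneg_right (Nat.floor_le hrn) hn.le

lemma tendsto_quadRoot_div {c x s : α → ℝ} {γ ξ : ℝ} (hs : Tendsto s l atTop)
    (hc : Tendsto (fun n => c n / s n) l (𝓝 γ)) (hx : Tendsto (fun n => x n / s n ^ 2) l (𝓝 ξ)) :
    Tendsto (fun n => quadRoot (c n) (x n) / s n) l (𝓝 (-γ + √(γ ^ 2 + 2 * ξ))) := by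
  have hshift : Tendsto (fun n => c n / s n + 1 / (2 * s n)) l (𝓝 γ) := by
    simpa using hc.add ((tendsto_const_nhds (x := (1 : ℝ))).div_atTop (hs.const_mul_atTop two_pos))
  refine (hshift.neg.add ((hshift.pow 2).add (hx.const_mul 2)).sqrt).congr' ?_
  filter_upwards [hs.eventually_gt_atTop 0] with n hn
  have hscale : ((c n + 1 / 2) ^ 2 + 2 * x n) / s n ^ 2
      = (c n / s n + 1 / (2 * s n)) ^ 2 + 2 * (x n / s n ^ 2) := by
    field_simp
  rw [quadRoot, add_div, ← hscale, Real.sqrt_div' _ (sq_nonneg _), Real.sqrt_sq hn.le]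
  ring

end Asymptotics

lemma tendsto_sqrt_natCast_atTop : Tendsto (fun B : ℕ => √(B : ℝ)) atTop atTop :=
  Real.tendsto_sqrt_atTop.comp tendsto_natCast_atTop_atTop

lemma tendsto_natFloor_mul_sqrt_div_sqrt {C : ℝ} (hC : 0 ≤ C) :
    Tendsto (fun B : ℕ => (⌊C * √(B : ℝ)⌋₊ : ℝ) / √(B : ℝ)) atTop (𝓝 C) := by
  refine tendsto_natFloor_div (.of_forall fun B => by positivity) tendsto_sqrt_natCast_atTop
    (tendsto_const_nhds.congr' ?_)
  filter_upwards [tendsto_sqrt_natCast_atTop.eventually_gt_atTop 0] with B hB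
  field_simp

lemma sSup_setOf_triangle_le (x : ℝ) :
    sSup {w : ℕ | (w : ℝ) * ((w : ℝ) + 1) / 2 ≤ x} = ⌊quadRoot 0 x⌋₊ := by
  simpa using sSup_setOf_mul_add_triangle_le x le_rfl

lemma tendsto_sSup_setOf_triangle_le_sub_div_sqrt {C : ℝ} (hC : 0 ≤ C) :
    Tendsto (fun B : ℕ =>
      ((sSup {w : ℕ | (w : ℝ) * ((w : ℝ) + 1) / 2 ≤ (B : ℝ) - ⌊C * √(B : ℝ)⌋₊} : ℕ) : ℝ) / √(B : ℝ))
      atTop (𝓝 √2) := by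
  have hs := tendsto_sqrt_natCast_atTop
  have hx : Tendsto (fun B : ℕ => ((B : ℝ) - ⌊C * √(B : ℝ)⌋₊) / √(B : ℝ) ^ 2) atTop (𝓝 1) := by
    have hsmall := (tendsto_natFloor_mul_sqrt_div_sqrt hC).mul (tendsto_inv_atTop_zero.comp hs)
    refine (by simpa using tendsto_const_nhds.sub hsmall : Tendsto _ _ (𝓝 (1 : ℝ))).congr' ?_
    filter_upwards [hs.eventually_gt_atTop 0] with B hB
    field_simp
    rw [Real.sq_sqrt (Nat.cast_nonneg B)]
  have hr := tendsto_quadRoot_div (c := fun _ => 0) (γ := 0) hs (by simp) hx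
  have hnonneg : ∀ᶠ B : ℕ in atTop, 0 ≤ quadRoot 0 ((B : ℝ) - ⌊C * √(B : ℝ)⌋₊) := by
    filter_upwards [hs.eventually_ge_atTop C] with B hB
    refine quadRoot_nonneg le_rfl (sub_nonneg.2 ((Nat.floor_le (by positivity)).trans ?_))
    calc C * √(B : ℝ) ≤ √(B : ℝ) * √(B : ℝ) := by gcongr
      _ = B := Real.mul_self_sqrt (Nat.cast_nonneg _)
  simp_rw [sSup_setOf_triangle_le]
  simpa using tendsto_natFloor_div hnonneg hs hr

lemma tendsto_sSup_setOf_floor_mul_add_triangle_le_div_sqrt {C : ℝ} (hC : 0 ≤ C) :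
    Tendsto (fun B : ℕ =>
      ((sSup {w : ℕ | (⌊C * √(B : ℝ)⌋₊ : ℝ) * w + (w : ℝ) * ((w : ℝ) + 1) / 2 ≤ (B : ℝ)} : ℕ) : ℝ)
        / √(B : ℝ)) atTop (𝓝 (√(C ^ 2 + 2) - C)) := by
  have hs := tendsto_sqrt_natCast_atTop
  have hx : Tendsto (fun B : ℕ => (B : ℝ) / √(B : ℝ) ^ 2) atTop (𝓝 1) := by
    refine tendsto_const_nhds.congr' ?_
    filter_upwards [eventually_gt_atTop 0] with B hB
    rw [Real.sq_sqrt (Nat.cast_nonneg B), div_self (by positivity)]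
  have hr := tendsto_quadRoot_div hs (tendsto_natFloor_mul_sqrt_div_sqrt hC) hx
  simp_rw [sSup_setOf_mul_add_triangle_le _ (Nat.cast_nonneg _)]
  rw [neg_add_eq_sub, mul_one] at hr
  exact tendsto_natFloor_div
    (.of_forall fun B => quadRoot_nonneg (Nat.cast_nonneg _) (Nat.cast_nonneg _)) hs hr

lemma add_sqrt_two_div_sqrt_le (C : ℝ) : (C + √2) / √(C ^ 2 + 2) ≤ √2 := by
  rw [div_le_iff₀ (by positivity), ← Real.sqrt_mul zero_le_two]
  refine (le_abs_self _).trans (Real.abs_le_sqrt ?_)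
  nlinarith [Real.sq_sqrt zero_le_two, sq_nonneg (C - √2)]

lemma isGreatest_add_sqrt_two_div_sqrt :
    IsGreatest ((fun C : ℝ => (C + √2) / √(C ^ 2 + 2)) '' {C | 0 < C}) √2 := by
  refine ⟨⟨√2, Real.sqrt_pos.2 two_pos, ?_⟩, ?_⟩
  · have hfour : √(4 : ℝ) = 2 := by
      rw [show (4 : ℝ) = 2 ^ 2 by norm_num, Real.sqrt_sq zero_le_two]
    simp only [Real.sq_sqrt zero_le_two]
    norm_num [hfour]
  · rintro _ ⟨C, -, rfl⟩
    exact add_sqrt_two_div_sqrt_le C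

theorem stmt_12 :
    (∀ C : ℝ, 0 < C →
      Filter.Tendsto (fun B : ℕ =>
        ((⌊C * Real.sqrt B⌋₊ : ℝ) +
          ((sSup {w : ℕ | (w : ℝ) * ((w : ℝ) + 1) / 2 ≤ (B : ℝ) - ⌊C * Real.sqrt B⌋₊} : ℕ) : ℝ)) /
        ((⌊C * Real.sqrt B⌋₊ : ℝ) +
          ((sSup {w : ℕ | (⌊C * Real.sqrt B⌋₊ : ℝ) * w + (w : ℝ) * ((w : ℝ) + 1) / 2 ≤ (B : ℝ)} : ℕ) : ℝ)))
        Filter.atTop (nhds ((C + Real.sqrt 2) / Real.sqrt (C ^ 2 + 2)))) ∧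
    IsLUB ((fun C : ℝ => (C + Real.sqrt 2) / Real.sqrt (C ^ 2 + 2)) '' {C | 0 < C})
      (Real.sqrt 2) := by
  refine ⟨fun C hC => ?_, isGreatest_add_sqrt_two_div_sqrt.isLUB⟩
  have ha := tendsto_natFloor_mul_sqrt_div_sqrt hC.le
  have hlim := (ha.add (tendsto_sSup_setOf_triangle_le_sub_div_sqrt hC.le)).div
    (ha.add (tendsto_sSup_setOf_floor_mul_add_triangle_le_div_sqrt hC.le))
    (by rw [add_sub_cancel]; positivity)
  rw [add_sub_cancel] at hlim
  refine hlim.congr' ?_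
  filter_upwards [tendsto_sqrt_natCast_atTop.eventually_gt_atTop 0] with B hB
  rw [Pi.div_apply, ← add_div, ← add_div, div_div_div_cancel_right₀ hB.ne']
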